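/- arXiv:2105.09387 — 3 statements merged into one kernel-verified Lean document; each statement's English description precedes it below -/
import Mathlib

section
/- Let f_i(x) = a_i x + b_i for i = 1, ..., n be affine maps of ℝ with real coefficients satisfying a_i > 1 for all i, and set s_i = b_i / (1 - a_i). If s_1 < s_2 < ... < s_n and (s_n - b_i)/a_i ≤ (s_1 - b_{i+1})/a_{i+1} for all i = 1, ..., n-1, then the semigroup generated by f_1, ..., f_n is free of rank n with free basis f_1, ..., f_n. -/
/-!
Ping-pong on `I = [s₁, sₙ]`: every `fᵢ` maps `I ∩ fᵢ⁻¹(I)` onto `I`, and the separation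
condition says that these intervals are pairwise disjoint except possibly for a shared
endpoint. If two words with different last letters `i ≠ j` gave the same map `H`, then `I`
would lie in `H(I ∩ fᵢ⁻¹(I) ∩ fⱼ⁻¹(I))`, the injective image of at most one point, although
`sᵢ ≠ sⱼ` lie in `I`. So equal maps have equal last letters, which cancel since each `fᵢ` is
bijective; a nonempty word is never the identity because its slope is a product of
factors `aᵢ > 1`.
-/

open Function Set

def wordMap {ι X : Type*} (f : ι → X → X) (w : List ι) : X → X :=
  (w.map f).foldr (· ∘ ·) id

section PingPong

variable {ι X : Type*} (f : ι → X → X)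

@[simp] lemma wordMap_nil : wordMap f [] = id := rfl

@[simp] lemma wordMap_cons (i : ι) (w : List ι) : wordMap f (i :: w) = f i ∘ wordMap f w := rfl

lemma wordMap_append (u v : List ι) : wordMap f (u ++ v) = wordMap f u ∘ wordMap f v := by
  induction u with
  | nil => rfl
  | cons i u ih => rw [List.cons_append, wordMap_cons, wordMap_cons, ih, comp_assoc]

lemma wordMap_append_singleton (u : List ι) (i : ι) :
    wordMap f (u ++ [i]) = wordMap f u ∘ f i := by
  rw [wordMap_append, wordMap_cons, wordMap_nil, comp_id]

lemma injective_wordMap (hf : ∀ i, Injective (f i)) (w : List ι) : Injective (wordMap f w) := by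
  induction w with
  | nil => exact injective_id
  | cons i w ih => exact (hf i).comp ih

variable {f} {I : Set X}

lemma subset_image_wordMap (hI : ∀ i, I ⊆ f i '' I) (w : List ι) : I ⊆ wordMap f w '' I := by
  induction w with
  | nil => simp
  | cons i w ih =>
    rw [wordMap_cons, image_comp]
    exact (hI i).trans (image_mono ih)

lemma subset_image_wordMap_append_singleton (hI : ∀ i, I ⊆ f i '' I) (u : List ι) (i : ι) :
    I ⊆ wordMap f (u ++ [i]) '' (I ∩ f i ⁻¹' I) := by
  rw [wordMap_append_singleton, image_comp, image_inter_preimage, inter_eq_right.mpr (hI i)]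
  exact subset_image_wordMap hI u

lemma subsingleton_of_wordMap_append_singleton_eq (hf : ∀ i, Injective (f i))
    (hI : ∀ i, I ⊆ f i '' I) {u v : List ι} {i j : ι}
    (hij : (I ∩ f i ⁻¹' I ∩ f j ⁻¹' I).Subsingleton)
    (h : wordMap f (u ++ [i]) = wordMap f (v ++ [j])) : I.Subsingleton := by
  have hsub : I ⊆ wordMap f (u ++ [i]) '' ((I ∩ f i ⁻¹' I) ∩ (I ∩ f j ⁻¹' I)) := by
    rw [image_inter (injective_wordMap f hf _)]
    exact subset_inter (subset_image_wordMap_append_singleton hI u i)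
      (h ▸ subset_image_wordMap_append_singleton hI v j)
  exact ((hij.anti fun _ hx => ⟨hx.1, hx.2.2⟩).image _).anti hsub

theorem injective_wordMap_of_pingPong (hf : ∀ i, Bijective (f i)) (hI : ∀ i, I ⊆ f i '' I)
    (hsep : Pairwise fun i j => (I ∩ f i ⁻¹' I ∩ f j ⁻¹' I).Subsingleton)
    (hnt : Nontrivial ι → I.Nontrivial) (hid : ∀ w ≠ [], wordMap f w ≠ id) :
    Injective (wordMap f) := by
  intro w₁ w₂ h
  induction w₁ using List.reverseRecOn generalizing w₂ with
  | nil =>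
    by_contra hne
    exact hid w₂ (Ne.symm hne) h.symm
  | append_singleton u i ih =>
    obtain rfl | ⟨v, j, rfl⟩ := w₂.eq_nil_or_concat'
    · exact absurd h (hid _ (by simp))
    obtain rfl : i = j := by
      by_contra hij
      exact (hnt ⟨i, j, hij⟩).not_subsingleton
        (subsingleton_of_wordMap_append_singleton_eq (fun k => (hf k).injective) hI (hsep hij) h)
    rw [wordMap_append_singleton, wordMap_append_singleton] at h
    rw [ih ((hf i).surjective.injective_comp_right h)]

end PingPong

section Affine

lemma bijective_mul_add {a : ℝ} (ha : a ≠ 0) (b : ℝ) : Bijective fun x => a * x + b :=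
  (Equiv.addRight b).bijective.comp (Equiv.mulLeft₀ a ha).bijective

lemma isFixedPt_mul_add {a : ℝ} (ha : a ≠ 1) (b : ℝ) :
    IsFixedPt (fun x => a * x + b) (b / (1 - a)) := by
  have : 1 - a ≠ 0 := sub_ne_zero.mpr ha.symm
  simp only [IsFixedPt]
  field_simp
  ring

lemma Icc_subset_image_mul_add {a b s lo hi : ℝ} (ha : 1 ≤ a)
    (hs : IsFixedPt (fun x => a * x + b) s) (hmem : s ∈ Icc lo hi) :
    Icc lo hi ⊆ (fun x => a * x + b) '' Icc lo hi := by
  have hs' : a * s + b = s := hs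
  have ha₀ : 0 < a := zero_lt_one.trans_le ha
  intro y ⟨hly, hyh⟩
  refine ⟨(y - b) / a, ⟨?_, ?_⟩, by field_simp; ring⟩
  · rw [le_div_iff₀ ha₀]
    nlinarith [mul_nonneg (sub_nonneg.mpr ha) (sub_nonneg.mpr hmem.1)]
  · rw [div_le_iff₀ ha₀]
    nlinarith [mul_nonneg (sub_nonneg.mpr ha) (sub_nonneg.mpr hmem.2)]

lemma subsingleton_preimage_Icc_inter_preimage_Icc {a b a' b' lo hi : ℝ} (ha : 0 < a)
    (ha' : 0 < a') (h : (hi - b) / a ≤ (lo - b') / a') :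
    ((fun x => a * x + b) ⁻¹' Icc lo hi ∩
      (fun x => a' * x + b') ⁻¹' Icc lo hi).Subsingleton := by
  refine subsingleton_of_subset_singleton (a := (hi - b) / a)
    fun x ⟨hx, hx'⟩ => le_antisymm ?_ ?_
  · rw [le_div_iff₀ ha]
    linarith [hx.2]
  · refine h.trans ?_
    rw [div_le_iff₀ ha']
    linarith [hx'.1]

variable {ι : Type*} (a b : ι → ℝ)

lemma wordMap_mul_add_sub (w : List ι) (x y : ℝ) :
    wordMap (fun i x => a i * x + b i) w x - wordMap (fun i x => a i * x + b i) w y =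
      (w.map a).prod * (x - y) := by
  induction w with
  | nil => simp
  | cons i w ih =>
    simp only [wordMap_cons, comp_apply, List.map_cons, List.prod_cons]
    rw [mul_assoc, ← ih]
    ring

lemma one_lt_prod_map {a : ι → ℝ} (ha : ∀ i, 1 < a i) {w : List ι} (hw : w ≠ []) :
    1 < (w.map a).prod := by
  induction w with
  | nil => exact absurd rfl hw
  | cons i w ih =>
    rw [List.map_cons, List.prod_cons]
    rcases eq_or_ne w [] with rfl | hw'
    · simpa using ha i
    · exact one_lt_mul_of_lt_of_le (ha i) (ih hw').le

lemma wordMap_mul_add_ne_id {a : ι → ℝ} (ha : ∀ i, 1 < a i) {w : List ι} (hw : w ≠ []) :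
    wordMap (fun i x => a i * x + b i) w ≠ id := by
  intro h
  have h10 := wordMap_mul_add_sub a b w 1 0
  simp only [h, id_eq, sub_zero, mul_one] at h10
  exact (one_lt_prod_map ha hw).ne h10

end Affine

lemma le_of_lt_of_interlace {α : Type*} [Preorder α] {n : ℕ} {L R : Fin n → α}
    (hLR : ∀ k, L k ≤ R k)
    (hstep : ∀ (k : Fin n) (hk : (k : ℕ) + 1 < n), R k ≤ L ⟨k + 1, hk⟩)
    {i j : Fin n} (hij : i < j) : R i ≤ L j := by
  obtain ⟨j, hj⟩ := j
  replace hij : (i : ℕ) + 1 ≤ j := Fin.lt_def.mp hij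
  revert hj
  induction j, hij using Nat.le_induction with
  | base => exact hstep i
  | succ m hm ih =>
    exact fun hj => (ih (by omega)).trans ((hLR _).trans (hstep ⟨m, by omega⟩ hj))

lemma pairwise_subsingleton_preimage_Icc {n : ℕ} {a b : Fin n → ℝ} {lo hi : ℝ}
    (ha : ∀ i, 0 < a i) (hlohi : lo ≤ hi)
    (hsep : ∀ (i : Fin n) (hk : (i : ℕ) + 1 < n),
      (hi - b i) / a i ≤ (lo - b ⟨i + 1, hk⟩) / a ⟨i + 1, hk⟩) :
    Pairwise fun i j => ((fun x => a i * x + b i) ⁻¹' Icc lo hi ∩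
      (fun x => a j * x + b j) ⁻¹' Icc lo hi).Subsingleton := by
  have hchain {i j : Fin n} (hij : i < j) : (hi - b i) / a i ≤ (lo - b j) / a j :=
    le_of_lt_of_interlace (L := fun k => (lo - b k) / a k) (R := fun k => (hi - b k) / a k)
      (fun k => div_le_div_of_nonneg_right (by linarith) (ha k).le) hsep hij
  intro i j hij
  rcases hij.lt_or_gt with h | h
  · exact subsingleton_preimage_Icc_inter_preimage_Icc (ha i) (ha j) (hchain h)
  · rw [inter_comm]
    exact subsingleton_preimage_Icc_inter_preimage_Icc (ha j) (ha i) (hchain h)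

/-- **Theorem 1.** Let `f i x = a i * x + b i` with `a i > 1` for all `i`, and
`s i = b i / (1 - a i)`. If `s 1 < s 2 < … < s n` and
`(s n - b i) / a i ≤ (s 1 - b (i+1)) / a (i+1)` for `i = 1, …, n-1`,
then the semigroup generated by `f 1, …, f n` is free of rank `n` with free basis
`f 1, …, f n`. -/
theorem free_semigroup_of_affine_maps_of_separated_intervals
    (n : ℕ) (a b s : Fin n → ℝ) (f : Fin n → ℝ → ℝ)
    (ha : ∀ i, 1 < a i)
    (hf : ∀ i, f i = fun x => a i * x + b i)
    (hs : ∀ i, s i = b i / (1 - a i))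
    (hmono : ∀ i j : Fin n, i < j → s i < s j)
    (hsep : ∀ i : Fin n, ∀ hi : (i : ℕ) + 1 < n,
      (s ⟨n - 1, by omega⟩ - b i) / a i ≤
        (s ⟨0, by omega⟩ - b ⟨(i : ℕ) + 1, hi⟩) / a ⟨(i : ℕ) + 1, hi⟩) :
    ∀ w₁ w₂ : List (Fin n),
      (w₁.map f).foldr (· ∘ ·) id = (w₂.map f).foldr (· ∘ ·) id → w₁ = w₂ := by
  obtain rfl : f = fun i x => a i * x + b i := funext hf
  rcases n.eq_zero_or_pos with rfl | hn
  · exact fun w₁ w₂ _ => Subsingleton.elim w₁ w₂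
  have hs_mono : StrictMono s := hmono
  have ha_pos (i : Fin n) : 0 < a i := zero_lt_one.trans (ha i)
  set lo := s ⟨0, hn⟩
  set hi := s ⟨n - 1, by omega⟩
  have hmem (i : Fin n) : s i ∈ Icc lo hi :=
    ⟨hs_mono.monotone (Fin.le_def.mpr i.val.zero_le),
      hs_mono.monotone (Fin.le_def.mpr (Nat.le_sub_one_of_lt i.isLt))⟩
  have hcover (i : Fin n) : Icc lo hi ⊆ (fun x => a i * x + b i) '' Icc lo hi :=
    Icc_subset_image_mul_add (ha i).le (hs i ▸ isFixedPt_mul_add (ha i).ne' _) (hmem i)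
  have hdisj := pairwise_subsingleton_preimage_Icc ha_pos (hmem ⟨0, hn⟩).2 hsep
  have hnt (hnt : Nontrivial (Fin n)) : (Icc lo hi).Nontrivial := by
    have hn2 := Fin.nontrivial_iff_two_le.mp hnt
    exact (Icc_infinite (hs_mono (Fin.mk_lt_mk.mpr (by omega)))).nontrivial
  exact injective_wordMap_of_pingPong (fun i => bijective_mul_add (ha_pos i).ne' _) hcover
    (fun i j hij => (hdisj hij).anti (inter_subset_inter_left _ inter_subset_right)) hnt
    (fun _ hw => wordMap_mul_add_ne_id b ha hw)
end

section
/- Let f_i(x) = a_i x + b_i for i = 1, ..., n be affine maps of ℝ with each a_i a positive integer and each b_i a rational number. If 1/a_1 + 1/a_2 + ... + 1/a_n > 1, then the semigroup generated by f_1, ..., f_n is not free with free basis f_1, ..., f_n; that is, there exist two non-identical finite sequences (i_1, ..., i_k) and (j_1, ..., j_l) of indices in {1, ..., n} such that f_{i_1} ∘ ... ∘ f_{i_k} = f_{j_1} ∘ ... ∘ f_{j_l} as functions on ℝ. -/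
namespace AffNF

variable {n : ℕ}

/-- multiplier of the composed word -/
def A (a : Fin n → ℕ) (w : List (Fin n)) : ℕ := (w.map a).prod

/-- translation part (rational) of the composed word -/
def Bq (a : Fin n → ℕ) (b : Fin n → ℚ) (w : List (Fin n)) : ℚ :=
  w.foldr (fun i r => a i * r + b i) 0

/-- integer translation part w.r.t. integer data `e` -/
def Bz (a : Fin n → ℕ) (e : Fin n → ℤ) (w : List (Fin n)) : ℤ :=
  w.foldr (fun i r => a i * r + e i) 0

@[simp] lemma A_nil (a : Fin n → ℕ) : A a [] = 1 := rfl
@[simp] lemma A_cons (a : Fin n → ℕ) (i : Fin n) (w : List (Fin n)) :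
    A a (i :: w) = a i * A a w := by simp [A]
@[simp] lemma Bq_nil (a : Fin n → ℕ) (b : Fin n → ℚ) : Bq a b [] = 0 := rfl
@[simp] lemma Bq_cons (a : Fin n → ℕ) (b : Fin n → ℚ) (i : Fin n) (w : List (Fin n)) :
    Bq a b (i :: w) = a i * Bq a b w + b i := rfl
@[simp] lemma Bz_nil (a : Fin n → ℕ) (e : Fin n → ℤ) : Bz a e [] = 0 := rfl
@[simp] lemma Bz_cons (a : Fin n → ℕ) (e : Fin n → ℤ) (i : Fin n) (w : List (Fin n)) :
    Bz a e (i :: w) = a i * Bz a e w + e i := rfl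

lemma one_le_A (a : Fin n → ℕ) (ha : ∀ i, 0 < a i) (w : List (Fin n)) : 1 ≤ A a w := by
  induction w with
  | nil => simp
  | cons i w ih =>
      have := ha i
      rw [A_cons]
      exact Nat.one_le_iff_ne_zero.2 (Nat.mul_ne_zero (by omega) (by omega))

lemma comp_eq (a : Fin n → ℕ) (b : Fin n → ℚ) (f : Fin n → ℝ → ℝ)
    (hf : ∀ i, f i = fun x => (a i : ℝ) * x + (b i : ℝ)) (w : List (Fin n)) :
    (w.map f).foldr (· ∘ ·) id = fun x => (A a w : ℝ) * x + ((Bq a b w : ℚ) : ℝ) := by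
  induction w with
  | nil => funext x; simp
  | cons i w ih =>
      funext x
      simp only [List.map_cons, List.foldr_cons, Function.comp_apply, ih, hf i]
      push_cast [A_cons, Bq_cons]
      ring

lemma maps_eq (a : Fin n → ℕ) (b : Fin n → ℚ) (f : Fin n → ℝ → ℝ)
    (hf : ∀ i, f i = fun x => (a i : ℝ) * x + (b i : ℝ)) {w₁ w₂ : List (Fin n)}
    (hA : A a w₁ = A a w₂) (hB : Bq a b w₁ = Bq a b w₂) :
    (w₁.map f).foldr (· ∘ ·) id = (w₂.map f).foldr (· ∘ ·) id := by
  rw [comp_eq a b f hf, comp_eq a b f hf, hA, hB]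

lemma Bz_cast (a : Fin n → ℕ) (b : Fin n → ℚ) (e : Fin n → ℤ) (D : ℕ)
    (he : ∀ i, (e i : ℚ) = D * b i) (w : List (Fin n)) :
    (Bz a e w : ℚ) = D * Bq a b w := by
  induction w with
  | nil => simp
  | cons i w ih => push_cast [Bz_cons, Bq_cons, ih, he i]; ring

lemma Bz_abs (a : Fin n → ℕ) (e : Fin n → ℤ) (E : ℤ)
    (ha2 : ∀ i, 2 ≤ a i) (hE : ∀ i, |e i| ≤ E) (w : List (Fin n)) :
    |Bz a e w| ≤ E * ((A a w : ℤ) - 1) := by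
  induction w with
  | nil => simp
  | cons i w ih =>
      have h1 : (1 : ℤ) ≤ (A a w : ℤ) := by
        exact_mod_cast one_le_A a (fun j => by have := ha2 j; omega) w
      have hai : (2 : ℤ) ≤ (a i : ℤ) := by exact_mod_cast ha2 i
      have hE0 : 0 ≤ E := le_trans (abs_nonneg _) (hE i)
      calc |Bz a e (i :: w)| ≤ |(a i : ℤ) * Bz a e w| + |e i| := abs_add_le _ _
        _ = (a i : ℤ) * |Bz a e w| + |e i| := by
            rw [abs_mul, abs_of_nonneg (by positivity : (0:ℤ) ≤ (a i : ℤ))]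
        _ ≤ E * ((A a (i :: w) : ℤ) - 1) := by
            have hAc : ((A a (i :: w) : ℤ)) = (a i : ℤ) * (A a w : ℤ) := by
              push_cast [A_cons]; ring
            rw [hAc]
            nlinarith [ih, hE i, abs_nonneg (Bz a e w)]

lemma A_replicate_append (a : Fin n → ℕ) (i j : Fin n) (k : ℕ) :
    A a (List.replicate k i ++ [j]) = a i ^ k * a j := by
  simp [A, List.map_append, List.map_replicate]

lemma Bq_replicate_append (a : Fin n → ℕ) (b : Fin n → ℚ) (i j : Fin n)
    (hai : a i = 1) (k : ℕ) :
    Bq a b (List.replicate k i ++ [j]) = k * b i + (a j * 0 + b j) := by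
  induction k with
  | zero => simp [Bq]
  | succ k ih =>
      rw [List.replicate_succ, List.cons_append, Bq_cons, ih, hai]
      push_cast
      ring

end AffNF

/-- **Theorem 3.** Let `f i x = a i * x + b i` where the `a i` are positive integers
and the `b i` are rational. If `1/a 1 + … + 1/a n > 1`, then the semigroup generated
by `f 1, …, f n` is not free with free basis `f 1, …, f n`: there are two distinct
words over the generators that are equal as functions on `ℝ`. -/
theorem affine_semigroup_not_free_of_sum_reciprocals_gt_one
    (n : ℕ) (a : Fin n → ℕ) (b : Fin n → ℚ) (f : Fin n → ℝ → ℝ)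
    (ha : ∀ i, 0 < a i)
    (hf : ∀ i, f i = fun x => (a i : ℝ) * x + (b i : ℝ))
    (hsum : 1 < ∑ i, (1 : ℝ) / (a i : ℝ)) :
    ∃ w₁ w₂ : List (Fin n), w₁ ≠ w₂ ∧
      (w₁.map f).foldr (· ∘ ·) id = (w₂.map f).foldr (· ∘ ·) id := by
  classical
  -- `n ≥ 2`
  have hn2 : 2 ≤ n := by
    by_contra hn
    have hle : ∑ i, (1 : ℝ) / (a i : ℝ) ≤ ∑ _i : Fin n, (1 : ℝ) := by
      refine Finset.sum_le_sum fun i _ => ?_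
      rw [div_le_one (by exact_mod_cast ha i)]
      exact_mod_cast ha i
    simp only [Finset.sum_const, Finset.card_univ, Fintype.card_fin, nsmul_eq_mul, mul_one]
      at hle
    have : (n : ℝ) ≤ 1 := by exact_mod_cast Nat.le_of_lt_succ (by omega)
    linarith
  by_cases hone : ∃ i, a i = 1
  · -- some map is a translation (or the identity): explicit relation
    obtain ⟨i, hai⟩ := hone
    obtain ⟨j, hj⟩ := Fintype.exists_ne_of_one_lt_card (by simp; omega) i
    refine ⟨[j, i], List.replicate (a j) i ++ [j], ?_, ?_⟩
    · obtain ⟨k, hk⟩ : ∃ k, a j = k + 1 := ⟨a j - 1, by have := ha j; omega⟩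
      rw [hk, List.replicate_succ, List.cons_append]
      intro hcon
      simp only [List.cons.injEq] at hcon
      exact hj hcon.1
    · refine AffNF.maps_eq a b f hf ?_ ?_
      · rw [AffNF.A_replicate_append, hai, one_pow]
        simp [AffNF.A, hai]
      · rw [AffNF.Bq_replicate_append a b i j hai]
        simp [AffNF.Bq, hai]
  · push_neg at hone
    have ha2 : ∀ i, 2 ≤ a i := fun i => by have := ha i; have := hone i; omega
    -- common denominator data
    set D : ℕ := ∏ i, (b i).den with hD_def
    have hD0 : 0 < D := Finset.prod_pos fun i _ => (b i).pos
    set e : Fin n → ℤ := fun i => (b i).num * ∏ j ∈ Finset.univ.erase i, ((b j).den : ℤ)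
      with he_def
    have he : ∀ i, (e i : ℚ) = (D : ℚ) * b i := by
      intro i
      have h1 : ((b i).num : ℚ) = b i * ((b i).den : ℚ) := by
        have hden : ((b i).den : ℚ) ≠ 0 := by exact_mod_cast (b i).pos.ne'
        exact (div_eq_iff hden).1 (Rat.num_div_den (b i))
      have h2 : (D : ℚ) = ((b i).den : ℚ) * ∏ j ∈ Finset.univ.erase i, ((b j).den : ℚ) := by
        rw [hD_def]
        push_cast
        exact (Finset.mul_prod_erase Finset.univ (fun j => ((b j).den : ℚ))
          (Finset.mem_univ i)).symm
      rw [he_def]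
      push_cast
      rw [h1, h2]
      ring
    set E : ℤ := ∑ i, |e i| with hE_def
    have hE : ∀ i, |e i| ≤ E := fun i =>
      Finset.single_le_sum (fun j _ => abs_nonneg (e j)) (Finset.mem_univ i)
    have hE0 : 0 ≤ E := Finset.sum_nonneg fun j _ => abs_nonneg (e j)
    -- choose the length L
    set S : ℝ := ∑ i, (1 : ℝ) / (a i : ℝ) with hS_def
    have hS1 : 1 < S := hsum
    have hS0 : 0 < S := by linarith
    set K : ℝ := ((2 * E + 1 : ℤ) : ℝ) with hK_def
    have hK0 : 0 < K := by
      rw [hK_def]; exact_mod_cast (by omega : (0:ℤ) < 2 * E + 1)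
    obtain ⟨L, hL1, hLmain⟩ : ∃ L : ℕ, 1 ≤ L ∧ K * ((L : ℝ) + 1) ^ n < S ^ L := by
      have hr : ‖(1 / S : ℝ)‖ < 1 := by
        rw [Real.norm_eq_abs, abs_of_pos (by positivity)]
        rw [div_lt_one hS0]; exact hS1
      have hsummable := summable_pow_mul_geometric_of_norm_lt_one n hr
      have htend := hsummable.tendsto_atTop_zero
      have heps : (0 : ℝ) < 1 / (K * 2 ^ n) := by positivity
      have hev := (htend.eventually (Metric.ball_mem_nhds 0 heps)).and
        (Filter.eventually_ge_atTop 1)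
      obtain ⟨L, hball, hL1⟩ := hev.exists
      refine ⟨L, hL1, ?_⟩
      rw [Real.dist_eq, sub_zero] at hball
      have hpos : (0:ℝ) < (L:ℝ) ^ n * (1/S) ^ L := by positivity
      rw [abs_of_pos hpos] at hball
      -- from L^n (1/S)^L < 1/(K 2^n) we get K * 2^n * L^n < S^L
      have h1 : K * 2 ^ n * ((L:ℝ) ^ n * (1/S) ^ L) < K * 2 ^ n * (1 / (K * 2 ^ n)) :=
        mul_lt_mul_of_pos_left hball (by positivity)
      rw [mul_one_div_cancel (by positivity)] at h1
      have hSLpos : (0:ℝ) < S ^ L := by positivity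
      have h2 : K * 2 ^ n * (L:ℝ) ^ n < S ^ L := by
        have : (1/S : ℝ) ^ L = (S ^ L)⁻¹ := by rw [one_div, inv_pow]
        rw [this] at h1
        calc K * 2 ^ n * (L:ℝ) ^ n
            = K * 2 ^ n * ((L:ℝ) ^ n * (S ^ L)⁻¹) * S ^ L := by
              field_simp
          _ < 1 * S ^ L := by
              exact mul_lt_mul_of_pos_right (by linarith) hSLpos
          _ = S ^ L := one_mul _
      have h3 : ((L:ℝ) + 1) ^ n ≤ 2 ^ n * (L:ℝ) ^ n := by
        rw [← mul_pow]
        refine pow_le_pow_left₀ (by positivity) ?_ n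
        have : (1:ℝ) ≤ (L:ℝ) := by exact_mod_cast hL1
        linarith
      calc K * ((L:ℝ)+1) ^ n ≤ K * (2 ^ n * (L:ℝ) ^ n) :=
            mul_le_mul_of_nonneg_left h3 hK0.le
        _ = K * 2 ^ n * (L:ℝ) ^ n := by ring
        _ < S ^ L := h2
    -- frequency vector of a word of length L
    set φ : (Fin L → Fin n) → (Fin n → Fin (L+1)) := fun w i =>
      ⟨(Finset.univ.filter fun j => w j = i).card,
        Nat.lt_succ_of_le (le_trans (Finset.card_filter_le _ _) (by simp))⟩ with hφ_def
    set m : (Fin n → Fin (L+1)) → ℕ := fun t => ∏ i, a i ^ (t i : ℕ) with hm_def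
    have hAw : ∀ w : Fin L → Fin n, (∏ j, a (w j)) = m (φ w) := by
      intro w
      rw [hm_def, ← Finset.prod_fiberwise Finset.univ w (fun j => a (w j))]
      refine Finset.prod_congr rfl fun i _ => ?_
      have hc : ∀ j ∈ Finset.univ.filter fun j => w j = i, a (w j) = a i := by
        intro j hj; rw [(Finset.mem_filter.1 hj).2]
      rw [Finset.prod_eq_pow_card hc]
    have hAofFn : ∀ w : Fin L → Fin n, AffNF.A a (List.ofFn w) = m (φ w) := by
      intro w
      rw [← hAw w]
      unfold AffNF.A
      rw [List.map_ofFn, List.prod_ofFn]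
      rfl
    have hsum_words : ∑ w : Fin L → Fin n, ∏ j, (1 / (a (w j)) : ℝ) = S ^ L := by
      have hps := Finset.prod_univ_sum (fun _ : Fin L => (Finset.univ : Finset (Fin n)))
        (fun _ i => (1 / (a i : ℝ)))
      rw [Fintype.piFinset_univ] at hps
      rw [← hps, hS_def]
      rw [Finset.prod_const, Finset.card_univ, Fintype.card_fin]
    have hPw : ∀ w : Fin L → Fin n, (∏ j, (1 / (a (w j)) : ℝ)) = 1 / (m (φ w) : ℝ) := by
      intro w
      simp only [one_div]
      rw [Finset.prod_inv_distrib]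
      congr 1
      rw [← hAw w]
      push_cast
      rfl
    obtain ⟨t, ht⟩ : ∃ t, S ^ L / ((L:ℝ)+1) ^ n ≤
        ∑ w ∈ Finset.univ.filter (fun w => φ w = t), ∏ j, (1 / (a (w j)) : ℝ) := by
      by_contra hcon
      push_neg at hcon
      have hlt := Finset.sum_lt_sum_of_nonempty
        (Finset.univ_nonempty (α := Fin n → Fin (L+1))) (fun t _ => hcon t)
      rw [Finset.sum_fiberwise Finset.univ φ (fun w => ∏ j, (1 / (a (w j)) : ℝ)),
        hsum_words, Finset.sum_const, Finset.card_univ, Fintype.card_fun,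
        Fintype.card_fin, Fintype.card_fin, nsmul_eq_mul] at hlt
      have hne' : ((L:ℝ)+1) ^ n ≠ 0 := by positivity
      rw [show (((L+1) ^ n : ℕ) : ℝ) = ((L:ℝ)+1) ^ n by push_cast; ring] at hlt
      rw [mul_div_cancel₀ _ hne'] at hlt
      exact lt_irrefl _ hlt
    set c : ℕ := (Finset.univ.filter fun w => φ w = t).card with hc_def
    have hm0 : 0 < m t := Finset.prod_pos fun i _ => pow_pos (ha i) _
    have hfsum : ∑ w ∈ Finset.univ.filter (fun w => φ w = t), ∏ j, (1/(a (w j)):ℝ)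
        = c * (1 / (m t : ℝ)) := by
      rw [Finset.sum_congr rfl (fun w hw => by
        rw [hPw w, (Finset.mem_filter.1 hw).2]), Finset.sum_const, nsmul_eq_mul, hc_def]
    have hKm : K * (m t : ℝ) < c := by
      have hmr : (0:ℝ) < (m t : ℝ) := by exact_mod_cast hm0
      have h1 : K < S ^ L / ((L:ℝ)+1) ^ n := (lt_div_iff₀ (by positivity)).2 hLmain
      have h2 : K < (c : ℝ) / (m t : ℝ) := by
        rw [hfsum] at ht
        rw [mul_one_div] at ht
        linarith
      exact (lt_div_iff₀ hmr).1 h2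
    have hcz : (2 * E + 1) * (m t : ℤ) < (c : ℤ) := by
      rw [hK_def] at hKm
      exact_mod_cast hKm
    set M : ℤ := E * ((m t : ℤ) - 1) with hM_def
    have hcard : (Finset.Icc (-M) M).card < c := by
      have hm1z : (1:ℤ) ≤ (m t : ℤ) := by exact_mod_cast hm0
      have h2M : 2 * M + 1 < (c : ℤ) := by nlinarith [hcz, hE0, hm1z]
      have hM0 : 0 ≤ M := mul_nonneg hE0 (by linarith)
      rw [Int.card_Icc]
      clear hM_def
      clear_value M
      omega
    have hmapsto : ∀ w ∈ Finset.univ.filter (fun w => φ w = t),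
        AffNF.Bz a e (List.ofFn w) ∈ Finset.Icc (-M) M := by
      intro w hw
      have habs := AffNF.Bz_abs a e E ha2 hE (List.ofFn w)
      rw [hAofFn w, (Finset.mem_filter.1 hw).2] at habs
      exact Finset.mem_Icc.2 (abs_le.mp habs)
    obtain ⟨w₁, hw₁, w₂, hw₂, hne, hBzeq⟩ :=
      Finset.exists_ne_map_eq_of_card_lt_of_maps_to hcard hmapsto
    refine ⟨List.ofFn w₁, List.ofFn w₂, fun hcon => hne (List.ofFn_injective hcon), ?_⟩
    refine AffNF.maps_eq a b f hf ?_ ?_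
    · rw [hAofFn w₁, hAofFn w₂, (Finset.mem_filter.1 hw₁).2, (Finset.mem_filter.1 hw₂).2]
    · have h₁ := AffNF.Bz_cast a b e D he (List.ofFn w₁)
      have h₂ := AffNF.Bz_cast a b e D he (List.ofFn w₂)
      have hDne : ((D:ℚ)) ≠ 0 := by exact_mod_cast hD0.ne'
      apply mul_left_cancel₀ hDne
      rw [← h₁, ← h₂, hBzeq]
end

section
/- Let m and n be positive integers with n > m ≥ 1, and let f_i(x) = m x + b_i for i = 1, ..., n be affine maps of ℝ with each b_i a rational number. Then there exist two non-identical finite sequences of indices in {1, ..., n} of the same length L whose corresponding compositions of the maps f_i are equal as functions on ℝ; in particular, the semigroup generated by f_1, ..., f_n is not free with free basis f_1, ..., f_n. -/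
/-!
The composition of the maps `x ↦ m x + b_i` along a word `w` of length `L` is
`x ↦ m ^ L x + t(w)` with `t(w) = ∑ₖ m ^ k b_{w_k}`. After multiplying all `b_i` by a common
denominator the values `t(w)` become integers of size `O(L m ^ L)`, while there are `n ^ L` words
of length `L`; since `m < n`, for large `L` two distinct words must share their translation part.
-/

open Filter

section TranslationPart

variable {ι R : Type*}

def translationPart [Semiring R] (a : R) (b : ι → R) (w : List ι) : R :=
  w.foldr (fun i s => b i + a * s) 0

theorem foldr_comp_map_affine [CommSemiring R] (a : R) (b : ι → R) (w : List ι) :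
    (w.map fun i x => a * x + b i).foldr (· ∘ ·) id =
      fun x => a ^ w.length * x + translationPart a b w := by
  induction w with
  | nil => funext x; simp [translationPart]
  | cons i w ih =>
    funext x
    simp only [List.map_cons, List.foldr_cons, Function.comp_apply, ih, List.length_cons,
      translationPart]
    ring

theorem map_translationPart {S F : Type*} [Semiring R] [Semiring S] [FunLike F R S]
    [RingHomClass F R S] (φ : F) (a : R) (b : ι → R) (w : List ι) :
    φ (translationPart a b w) = translationPart (φ a) (φ ∘ b) w := by
  induction w with
  | nil => simp [translationPart]
  | cons i w ih => simp_all [translationPart]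

theorem mul_translationPart [CommSemiring R] (d a : R) (b : ι → R) (w : List ι) :
    d * translationPart a b w = translationPart a (fun i => d * b i) w := by
  induction w with
  | nil => simp [translationPart]
  | cons i w ih =>
    simp only [translationPart, List.foldr_cons] at ih ⊢
    rw [← ih]
    ring

theorem abs_translationPart_le [CommRing R] [LinearOrder R] [IsStrictOrderedRing R]
    {a M : R} {b : ι → R} (ha : 1 ≤ |a|) (hb : ∀ i, |b i| ≤ M) (w : List ι) :
    |translationPart a b w| ≤ M * w.length * |a| ^ w.length := by
  induction w with
  | nil => simp [translationPart]
  | cons i w ih =>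
    have hM : 0 ≤ M := (abs_nonneg _).trans (hb i)
    have hpow : 1 ≤ |a| ^ (w.length + 1) := one_le_pow₀ ha
    calc |b i + a * translationPart a b w|
        ≤ M + |a| * (M * w.length * |a| ^ w.length) := by
          grw [abs_add_le, abs_mul, hb i, ih]
      _ ≤ M * |a| ^ (w.length + 1) + M * w.length * |a| ^ (w.length + 1) := by
          have hshift : |a| * (M * w.length * |a| ^ w.length) =
              M * w.length * |a| ^ (w.length + 1) := by ring
          linarith [le_mul_of_one_le_right hM hpow]
      _ = M * ↑(i :: w).length * |a| ^ (i :: w).length := by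
          simp only [List.length_cons]; push_cast; ring

end TranslationPart

theorem eventually_mul_mul_pow_lt_pow (C : ℕ) {m n : ℕ} (hmn : m < n) :
    ∀ᶠ L in atTop, C * L * m ^ L < n ^ L := by
  have hn : (0 : ℝ) < n := by exact_mod_cast (Nat.zero_le m).trans_lt hmn
  have hr : |(m / n : ℝ)| < 1 := by
    rw [abs_of_nonneg (by positivity), div_lt_one hn]; exact_mod_cast hmn
  have hlim := (tendsto_pow_const_mul_const_pow_of_abs_lt_one 1 hr).const_mul (C : ℝ)
  rw [mul_zero] at hlim
  filter_upwards [hlim.eventually (gt_mem_nhds one_pos)] with L hL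
  rw [pow_one, div_pow, ← mul_assoc, mul_div_assoc', div_lt_one (by positivity)] at hL
  exact_mod_cast hL

theorem exists_ne_translationPart_eq {ι : Type*} [Fintype ι] (c : ι → ℤ) {m : ℕ}
    (hm : 1 ≤ m) (hmι : m < Fintype.card ι) :
    ∃ L : ℕ, ∃ w₁ w₂ : List ι, w₁.length = L ∧ w₂.length = L ∧ w₁ ≠ w₂ ∧
      translationPart (m : ℤ) c w₁ = translationPart (m : ℤ) c w₂ := by
  set M := ∑ i, (c i).natAbs
  have hc : ∀ i, |c i| ≤ M := fun i => by
    rw [Int.abs_eq_natAbs]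
    exact_mod_cast Finset.single_le_sum (f := fun j => (c j).natAbs) (fun j _ => Nat.zero_le _)
      (Finset.mem_univ i)
  obtain ⟨L, hL, hL1⟩ :=
    ((eventually_mul_mul_pow_lt_pow (2 * M + 1) hmι).and (eventually_ge_atTop 1)).exists
  set B := M * L * m ^ L with hB
  -- pigeonhole: `n ^ L` words of length `L`, but only `2 B + 1` possible translation parts
  have hmaps :
      ∀ v : Fin L → ι, translationPart (m : ℤ) c (List.ofFn v) ∈ Finset.Icc (-B : ℤ) B :=
    fun v => by
      have h := abs_translationPart_le (by rw [Nat.abs_cast]; exact_mod_cast hm) hc (List.ofFn v)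
      rw [List.length_ofFn, Nat.abs_cast] at h
      exact Finset.mem_Icc.mpr (abs_le.mp (by rw [hB]; push_cast; exact h))
  have hcard : (Finset.Icc (-B : ℤ) B).card < (Finset.univ : Finset (Fin L → ι)).card := by
    rw [Int.card_Icc, Finset.card_univ, Fintype.card_fun, Fintype.card_fin]
    rw [show (B + 1 - -B : ℤ).toNat = 2 * B + 1 by omega, hB]
    nlinarith [Nat.one_le_pow L m hm]
  obtain ⟨v₁, -, v₂, -, hne, heq⟩ :=
    Finset.exists_ne_map_eq_of_card_lt_of_maps_to hcard (fun v _ => hmaps v)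
  exact ⟨L, List.ofFn v₁, List.ofFn v₂, List.length_ofFn, List.length_ofFn,
    List.ofFn_injective.ne hne, heq⟩

/-- If `n > m ≥ 1` and `f i x = m * x + b i` with `b i` rational for `i = 1, …, n`,
then there are two distinct index words of the same length `L` whose compositions
coincide as functions on `ℝ`; in particular the semigroup generated by
`f 1, …, f n` is not free with free basis `f 1, …, f n`. -/
theorem affine_semigroup_not_free_of_equal_slopes
    (m n : ℕ) (hm : 1 ≤ m) (hmn : m < n)
    (b : Fin n → ℚ) (f : Fin n → ℝ → ℝ)
    (hf : ∀ i, f i = fun x => (m : ℝ) * x + (b i : ℝ)) :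
    ∃ L : ℕ, ∃ w₁ w₂ : List (Fin n),
      w₁.length = L ∧ w₂.length = L ∧ w₁ ≠ w₂ ∧
      (w₁.map f).foldr (· ∘ ·) id = (w₂.map f).foldr (· ∘ ·) id := by
  obtain ⟨⟨D, hD⟩, hDb⟩ :=
    IsLocalization.exist_integer_multiples_of_finite (nonZeroDivisors ℤ) b
  choose c hc using hDb
  obtain ⟨L, w₁, w₂, h₁, h₂, hne, heq⟩ :=
    exists_ne_translationPart_eq c hm (by rwa [Fintype.card_fin])
  have hcleared : ∀ w, (D : ℚ) * translationPart (m : ℚ) b w = translationPart (m : ℤ) c w := by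
    intro w
    have hcast := map_translationPart (Int.castRingHom ℚ) (m : ℤ) c w
    simp only [eq_intCast, Int.cast_natCast, Function.comp_def] at hcast
    rw [mul_translationPart, hcast]
    congr 1
    funext i
    simpa using (hc i).symm
  have htrans : translationPart (m : ℚ) b w₁ = translationPart (m : ℚ) b w₂ :=
    mul_left_cancel₀ (a := (D : ℚ)) (by simpa using nonZeroDivisors.ne_zero hD)
      (by rw [hcleared, hcleared, heq])
  obtain rfl : f = fun i x => (m : ℝ) * x + (b i : ℝ) := funext hf
  refine ⟨L, w₁, w₂, h₁, h₂, hne, ?_⟩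
  rw [foldr_comp_map_affine, foldr_comp_map_affine, h₁, h₂]
  have hreal := congrArg (Rat.castHom ℝ) htrans
  rw [map_translationPart, map_translationPart] at hreal
  simp only [Function.comp_def, eq_ratCast, map_natCast] at hreal
  rw [hreal]
end
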